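/- Let Ω ⊆ ℝⁿ (n ≥ 2) be a nonempty, open, bounded set and let G ⊆ Ω be Lebesgue-measurable with P_Ω(G) < ∞. Let ξ_k ↘ 0 and let φ_k : Ω → ℝ (k = 1, 2, …) be continuously differentiable with x ↦ |∇φ_k(x)|² and x ↦ W(φ_k(x)) Lebesgue integrable on Ω. Assume φ_k → χ_G almost everywhere in Ω and sup_{k ≥ 1} ∫_Ω [(ξ_k/2)|∇φ_k|² + W(φ_k)/ξ_k] dx < ∞. Define η_k(x) := ∫₀^{φ_k(x)} √(2 W(t)) dt. Then P_Ω(G) ≤ liminf_{k→∞} ∫_Ω |∇η_k| dx ≤ liminf_{k→∞} ∫_Ω [(ξ_k/2)|∇φ_k|² + W(φ_k)/ξ_k] dx. -/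

import Mathlib

open MeasureTheory Filter Topology RealInnerProductSpace

/-- The quartic double-well potential `W(s) = 18 s² (1-s)²`. -/
noncomputable def W (s : ℝ) : ℝ := 18 * s ^ 2 * (1 - s) ^ 2

/-- Divergence of a vector field on `ℝⁿ`. -/
noncomputable def vdiv {n : ℕ} (g : EuclideanSpace ℝ (Fin n) → EuclideanSpace ℝ (Fin n))
    (x : EuclideanSpace ℝ (Fin n)) : ℝ :=
  ∑ i, fderiv ℝ g x (EuclideanSpace.single i 1) i

/-- The set of numbers `∫_G div g` over admissible test vector fields `g` (C¹, compactly
supported in `Ω`, with `|g| ≤ 1`), whose supremum is the perimeter of `G` in `Ω`. -/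
noncomputable def perimSet {n : ℕ} (Ω G : Set (EuclideanSpace ℝ (Fin n))) : Set ℝ :=
  { r | ∃ g : EuclideanSpace ℝ (Fin n) → EuclideanSpace ℝ (Fin n),
      ContDiff ℝ 1 g ∧ HasCompactSupport g ∧ tsupport g ⊆ Ω ∧
      (∀ x, ‖g x‖ ≤ 1) ∧ r = ∫ x in G, vdiv g x }

/-- The perimeter `P_Ω(G)` of `G` in `Ω`. -/
noncomputable def perim {n : ℕ} (Ω G : Set (EuclideanSpace ℝ (Fin n))) : ℝ :=
  sSup (perimSet Ω G)

/-- `η_k(x) = ∫₀^{φ_k(x)} √(2W(t)) dt`. -/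
noncomputable def etaFn {n : ℕ} (φ : ℕ → EuclideanSpace ℝ (Fin n) → ℝ) (k : ℕ)
    (x : EuclideanSpace ℝ (Fin n)) : ℝ :=
  ∫ t in (0 : ℝ)..(φ k x), Real.sqrt (2 * W t)

/-! Cutting `√(2W(t)) = 6|t(1-t)|` off outside `[0, 1]` gives a primitive `etaTrunc` with
`0 ≤ etaTrunc ≤ 1`, `etaTrunc 0 = 0`, `etaTrunc 1 = 1` and `etaTrunc' ≤ √(2W)`. For an admissible
field `g`, integration by parts and the chain rule give
`∫_Ω etaTrunc(φ_k) div g = -∫_Ω etaTrunc'(φ_k) ⟨∇φ_k, g⟩ ≤ ∫_Ω √(2W(φ_k)) |∇φ_k|`, while by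
dominated convergence the left side tends to `∫_G div g`; the supremum over `g` gives the first
inequality. The second one is the pointwise AM-GM inequality `√(2W) a ≤ (ξ/2) a² + W/ξ`. -/

lemma W_nonneg (s : ℝ) : 0 ≤ W s := by unfold W; positivity

lemma sqrt_two_mul_W (t : ℝ) : √(2 * W t) = 6 * |t * (1 - t)| := by
  rw [show 2 * W t = (6 * (t * (1 - t))) ^ 2 by unfold W; ring, Real.sqrt_sq_eq_abs, abs_mul,
    abs_of_pos (by norm_num : (0:ℝ) < 6)]

lemma sqrt_two_mul_mul_le {w ξ : ℝ} (hw : 0 ≤ w) (hξ : 0 < ξ) (a : ℝ) :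
    √(2 * w) * a ≤ ξ / 2 * a ^ 2 + w / ξ := by
  have hsq : √(2 * w) ^ 2 = 2 * w := Real.sq_sqrt (by linarith)
  rw [← sub_nonneg, show ξ / 2 * a ^ 2 + w / ξ - √(2 * w) * a = (ξ * a - √(2 * w)) ^ 2 / (2 * ξ)
    by field_simp; rw [sub_sq, hsq]; ring]
  positivity

noncomputable def psiTrunc (t : ℝ) : ℝ := 6 * max (t * (1 - t)) 0

noncomputable def etaTrunc (s : ℝ) : ℝ := ∫ t in (0 : ℝ)..s, psiTrunc t

lemma psiTrunc_nonneg (t : ℝ) : 0 ≤ psiTrunc t := by unfold psiTrunc; positivity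

lemma psiTrunc_le (t : ℝ) : psiTrunc t ≤ √(2 * W t) := by
  rw [sqrt_two_mul_W, psiTrunc]
  gcongr
  exact max_le (le_abs_self _) (abs_nonneg _)

lemma continuous_psiTrunc : Continuous psiTrunc := by unfold psiTrunc; fun_prop

lemma psiTrunc_eq_zero {t : ℝ} (ht : t ∉ Set.Ioo 0 1) : psiTrunc t = 0 := by
  rw [Set.mem_Ioo, not_and_or, not_lt, not_lt] at ht
  rw [psiTrunc, max_eq_right, mul_zero]
  rcases ht with h | h <;> nlinarith

lemma hasDerivAt_etaTrunc (s : ℝ) : HasDerivAt etaTrunc (psiTrunc s) s :=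
  intervalIntegral.integral_hasDerivAt_right (continuous_psiTrunc.intervalIntegrable _ _)
    (continuous_psiTrunc.stronglyMeasurableAtFilter _ _) continuous_psiTrunc.continuousAt

lemma contDiff_etaTrunc : ContDiff ℝ 1 etaTrunc := by
  rw [contDiff_one_iff_deriv]
  refine ⟨fun s => (hasDerivAt_etaTrunc s).differentiableAt, ?_⟩
  rw [funext fun s => (hasDerivAt_etaTrunc s).deriv]
  exact continuous_psiTrunc

lemma monotone_etaTrunc : Monotone etaTrunc :=
  monotone_of_deriv_nonneg (fun s => (hasDerivAt_etaTrunc s).differentiableAt)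
    fun s => (hasDerivAt_etaTrunc s).deriv ▸ psiTrunc_nonneg s

lemma etaTrunc_zero : etaTrunc 0 = 0 := intervalIntegral.integral_same

lemma etaTrunc_of_nonpos {s : ℝ} (hs : s ≤ 0) : etaTrunc s = 0 := by
  rw [etaTrunc, intervalIntegral.integral_congr (g := 0) fun t ht => psiTrunc_eq_zero ?_]
  · simp
  · rw [Set.uIcc_of_ge hs] at ht
    exact fun h => h.1.not_ge ht.2

lemma etaTrunc_one : etaTrunc 1 = 1 := by
  rw [etaTrunc, intervalIntegral.integral_congr (g := fun t => 6 * t - 6 * t ^ 2) fun t ht => ?_]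
  · rw [intervalIntegral.integral_sub (Continuous.intervalIntegrable (by fun_prop) _ _)
      (Continuous.intervalIntegrable (by fun_prop) _ _), intervalIntegral.integral_const_mul]
    norm_num [integral_id]
  · rw [Set.uIcc_of_le zero_le_one] at ht
    rw [psiTrunc, max_eq_left (mul_nonneg ht.1 (by linarith [ht.2]))]
    ring

lemma etaTrunc_of_one_le {s : ℝ} (hs : 1 ≤ s) : etaTrunc s = 1 := by
  rw [etaTrunc, ← intervalIntegral.integral_add_adjacent_intervals (b := 1)
    (continuous_psiTrunc.intervalIntegrable _ _) (continuous_psiTrunc.intervalIntegrable _ _),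
    ← etaTrunc, etaTrunc_one,
    intervalIntegral.integral_congr (g := 0) fun t ht => psiTrunc_eq_zero ?_]
  · simp
  · rw [Set.uIcc_of_le hs] at ht
    exact fun h => h.2.not_ge ht.1

lemma abs_etaTrunc_le_one (s : ℝ) : |etaTrunc s| ≤ 1 := by
  rw [abs_le]
  constructor
  · rcases le_total s 0 with hs | hs
    · rw [etaTrunc_of_nonpos hs]; norm_num
    · linarith [monotone_etaTrunc hs, etaTrunc_zero]
  · rcases le_total s 1 with hs | hs
    · linarith [monotone_etaTrunc hs, etaTrunc_one]
    · rw [etaTrunc_of_one_le hs]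

lemma ContinuousLinearMap.apply_eq_sum_single {ι : Type*} [Fintype ι] [DecidableEq ι]
    (L : EuclideanSpace ℝ ι →L[ℝ] ℝ) (v : EuclideanSpace ℝ ι) :
    L v = ∑ i, L (EuclideanSpace.single i 1) * v i := by
  conv_lhs => rw [← (EuclideanSpace.basisFun ι ℝ).sum_repr v]
  simp [mul_comm]

section Divergence

variable {n : ℕ} {Ω : Set (EuclideanSpace ℝ (Fin n))}
  {g : EuclideanSpace ℝ (Fin n) → EuclideanSpace ℝ (Fin n)}

lemma vdiv_eq_zero_of_notMem_tsupport {x : EuclideanSpace ℝ (Fin n)} (hx : x ∉ tsupport g) :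
    vdiv g x = 0 := by
  simp [vdiv, image_eq_zero_of_notMem_tsupport fun h => hx (tsupport_fderiv_subset ℝ h)]

lemma HasCompactSupport.vdiv (hgc : HasCompactSupport g) : HasCompactSupport (vdiv g) :=
  hgc.mono' fun _ hx => by_contra fun h => hx (vdiv_eq_zero_of_notMem_tsupport h)

lemma continuous_vdiv (hg : ContDiff ℝ 1 g) : Continuous (vdiv g) :=
  continuous_finsetSum _ fun i _ => (EuclideanSpace.proj i).continuous.comp
    ((hg.continuous_fderiv one_ne_zero).clm_apply continuous_const)

lemma integral_mul_vdiv_eq_neg (hΩ : IsOpen Ω) {u : EuclideanSpace ℝ (Fin n) → ℝ}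
    (hu : ContDiffOn ℝ 1 u Ω) (hg : ContDiff ℝ 1 g) (hgc : HasCompactSupport g)
    (hgΩ : tsupport g ⊆ Ω) :
    ∫ x in Ω, u x * vdiv g x = -∫ x in Ω, fderiv ℝ u x (g x) := by
  have hg0 : ∀ x ∉ tsupport g, g x = 0 := fun x => image_eq_zero_of_notMem_tsupport
  rw [setIntegral_eq_integral_of_forall_compl_eq_zero fun x hx => by
      rw [vdiv_eq_zero_of_notMem_tsupport fun h => hx (hgΩ h), mul_zero],
    setIntegral_eq_integral_of_forall_compl_eq_zero fun x hx => by
      rw [hg0 x fun h => hx (hgΩ h), map_zero]]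
  have hint : ∀ f : EuclideanSpace ℝ (Fin n) → ℝ, ContinuousOn f Ω →
      (∀ x ∉ tsupport g, f x = 0) → Integrable f := fun f hf hf0 =>
    ((hf.mono hgΩ).integrableOn_compact hgc).integrable_of_forall_notMem_eq_zero hf0
  have hdg0 : ∀ x ∉ tsupport g, fderiv ℝ g x = 0 := fun x hx =>
    image_eq_zero_of_notMem_tsupport fun h => hx (tsupport_fderiv_subset ℝ h)
  have hdu := hu.continuousOn_fderiv_of_isOpen hΩ le_rfl
  have hgi : ∀ i, Continuous fun x => g x i := fun i =>
    (EuclideanSpace.proj i).continuous.comp hg.continuous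
  have hI₁ : ∀ i, Integrable fun x => u x * fderiv ℝ g x (EuclideanSpace.single i 1) i :=
    fun i => hint _ (hu.continuousOn.mul (by fun_prop)) fun x hx => by simp [hdg0 x hx]
  have hI₂ : ∀ i, Integrable fun x => fderiv ℝ u x (EuclideanSpace.single i 1) * g x i :=
    fun i => hint _ ((hdu.clm_apply continuousOn_const).mul (hgi i).continuousOn)
      fun x hx => by simp [hg0 x hx]
  -- integration by parts along `eᵢ` for the bilinear map `(a, w) ↦ a * w i`
  have hcoord : ∀ i, ∫ x, u x * fderiv ℝ g x (EuclideanSpace.single i 1) i =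
      -∫ x, fderiv ℝ u x (EuclideanSpace.single i 1) * g x i := fun i =>
    integral_bilinear_fderiv_right_eq_neg_left_of_integrable
      (B := ((ContinuousLinearMap.mul ℝ ℝ).flip.comp (EuclideanSpace.proj i)).flip)
      (hI₂ i) (hI₁ i)
      (hint _ (hu.continuousOn.mul (hgi i).continuousOn) fun x hx => by simp [hg0 x hx])
      (fun x hx => (hu.contDiffAt (hΩ.mem_nhds (hgΩ hx))).differentiableAt one_ne_zero)
      fun x _ => hg.differentiable one_ne_zero x
  simp_rw [vdiv, Finset.mul_sum,
    fun x => ContinuousLinearMap.apply_eq_sum_single (fderiv ℝ u x) (g x)]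
  rw [integral_finsetSum _ fun i _ => hI₁ i, integral_finsetSum _ fun i _ => hI₂ i,
    ← Finset.sum_neg_distrib]
  exact Finset.sum_congr rfl fun i _ => hcoord i

end Divergence

section InnerProductSpace

variable {E : Type*} [NormedAddCommGroup E] [InnerProductSpace ℝ E] [CompleteSpace E]
  {φ : E → ℝ}

lemma abs_fderiv_etaTrunc_comp_le {x : E} (hφ : DifferentiableAt ℝ φ x) {v : E} (hv : ‖v‖ ≤ 1) :
    |fderiv ℝ (fun y => etaTrunc (φ y)) x v| ≤ √(2 * W (φ x)) * ‖gradient φ x‖ := by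
  have hD : HasFDerivAt (fun y => etaTrunc (φ y)) (psiTrunc (φ x) • fderiv ℝ φ x) x :=
    (hasDerivAt_etaTrunc (φ x)).comp_hasFDerivAt x hφ.hasFDerivAt
  have hgrad : ‖gradient φ x‖ = ‖fderiv ℝ φ x‖ := by simp [gradient]
  rw [hD.fderiv, smul_apply, smul_eq_mul, abs_mul,
    abs_of_nonneg (psiTrunc_nonneg _), hgrad, ← Real.norm_eq_abs]
  gcongr
  · exact psiTrunc_le _
  · exact (fderiv ℝ φ x).le_of_opNorm_le_of_le le_rfl hv |>.trans_eq (mul_one _)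

lemma integrableOn_sqrt_two_mul_W_mul_norm_gradient [MeasurableSpace E] {μ : Measure E}
    {Ω : Set E} (hgrad : IntegrableOn (fun x => ‖gradient φ x‖ ^ 2) Ω μ)
    (hW : IntegrableOn (fun x => W (φ x)) Ω μ) :
    IntegrableOn (fun x => √(2 * W (φ x)) * ‖gradient φ x‖) Ω μ := by
  have hmeas_grad : AEStronglyMeasurable (fun x => ‖gradient φ x‖) (μ.restrict Ω) :=
    (Real.continuous_sqrt.comp_aestronglyMeasurable hgrad.aestronglyMeasurable).congr
      (.of_forall fun x => Real.sqrt_sq (norm_nonneg _))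
  have hmeas_W : AEStronglyMeasurable (fun x => √(2 * W (φ x))) (μ.restrict Ω) :=
    (by fun_prop : Continuous fun w : ℝ => √(2 * w)).comp_aestronglyMeasurable
      hW.aestronglyMeasurable
  refine ((hgrad.const_mul (1 / 2)).add (hW.div_const 1)).mono' (hmeas_W.mul hmeas_grad)
    (.of_forall fun x => ?_)
  rw [Real.norm_eq_abs, abs_of_nonneg (by positivity)]
  exact sqrt_two_mul_mul_le (W_nonneg _) one_pos _

end InnerProductSpace

lemma tendsto_setIntegral_etaTrunc_comp_mul {X : Type*} [MeasurableSpace X] {μ : Measure X}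
    {Ω G : Set X} (hG : MeasurableSet G) (hGΩ : G ⊆ Ω) {φ : ℕ → X → ℝ}
    (hφ : ∀ k, AEStronglyMeasurable (φ k) (μ.restrict Ω)) {f : X → ℝ} (hf : Integrable f μ)
    (hae : ∀ᵐ x ∂(μ.restrict Ω),
      Tendsto (fun k => φ k x) atTop (𝓝 (G.indicator (fun _ => (1 : ℝ)) x))) :
    Tendsto (fun k => ∫ x in Ω, etaTrunc (φ k x) * f x ∂μ) atTop (𝓝 (∫ x in G, f x ∂μ)) := by
  have hlim : ∫ x in G, f x ∂μ =
      ∫ x in Ω, etaTrunc (G.indicator (fun _ => (1 : ℝ)) x) * f x ∂μ := by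
    have hind : ∀ x, etaTrunc (G.indicator (fun _ => (1 : ℝ)) x) * f x = G.indicator f x := by
      intro x
      by_cases hx : x ∈ G <;> simp [hx, etaTrunc_zero, etaTrunc_one]
    rw [funext hind, integral_indicator hG, Measure.restrict_restrict hG, Set.inter_eq_left.2 hGΩ]
  rw [hlim]
  refine tendsto_integral_of_dominated_convergence (fun x => |f x|)
    (fun k => (contDiff_etaTrunc.continuous.comp_aestronglyMeasurable (hφ k)).mul
      hf.aestronglyMeasurable.restrict) hf.abs.integrableOn
    (fun k => .of_forall fun x => ?_) ?_
  · rw [norm_mul, Real.norm_eq_abs, Real.norm_eq_abs]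
    exact mul_le_of_le_one_left (abs_nonneg _) (abs_etaTrunc_le_one _)
  · filter_upwards [hae] with x hx
    exact ((contDiff_etaTrunc.continuous.tendsto _).comp hx).mul_const _

section Perimeter

variable {n : ℕ} {Ω G : Set (EuclideanSpace ℝ (Fin n))}

lemma perimSet_nonempty : (perimSet Ω G).Nonempty :=
  ⟨0, 0, contDiff_const, HasCompactSupport.zero, by simp, by simp, by simp [vdiv]⟩

lemma setIntegral_etaTrunc_comp_mul_vdiv_le (hΩ : IsOpen Ω) {φ : EuclideanSpace ℝ (Fin n) → ℝ}
    (hφ : ContDiffOn ℝ 1 φ Ω) {g : EuclideanSpace ℝ (Fin n) → EuclideanSpace ℝ (Fin n)}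
    (hg : ContDiff ℝ 1 g) (hgc : HasCompactSupport g) (hgΩ : tsupport g ⊆ Ω)
    (hg1 : ∀ x, ‖g x‖ ≤ 1) (hint : IntegrableOn (fun x => √(2 * W (φ x)) * ‖gradient φ x‖) Ω) :
    ∫ x in Ω, etaTrunc (φ x) * vdiv g x ≤ ∫ x in Ω, √(2 * W (φ x)) * ‖gradient φ x‖ := by
  rw [integral_mul_vdiv_eq_neg (u := fun x => etaTrunc (φ x)) hΩ
    (contDiff_etaTrunc.comp_contDiffOn hφ) hg hgc hgΩ]
  refine (neg_le_abs _).trans (Real.norm_eq_abs _ ▸ norm_integral_le_of_norm_le hint ?_)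
  filter_upwards [ae_restrict_mem hΩ.measurableSet] with x hx
  exact abs_fderiv_etaTrunc_comp_le
    ((hφ.contDiffAt (hΩ.mem_nhds hx)).differentiableAt one_ne_zero) (hg1 x)

end Perimeter

theorem perimeter_le_liminf_general {n : ℕ}
    (Ω : Set (EuclideanSpace ℝ (Fin n))) (hΩopen : IsOpen Ω)
    (G : Set (EuclideanSpace ℝ (Fin n))) (hGmeas : MeasurableSet G) (hGΩ : G ⊆ Ω)
    (ξ : ℕ → ℝ) (hξpos : ∀ k, 0 < ξ k)
    (φ : ℕ → EuclideanSpace ℝ (Fin n) → ℝ)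
    (hφ : ∀ k, ContDiffOn ℝ 1 (φ k) Ω)
    (hgradInt : ∀ k, IntegrableOn (fun x => ‖gradient (φ k) x‖ ^ 2) Ω)
    (hWInt : ∀ k, IntegrableOn (fun x => W (φ k x)) Ω)
    (hae : ∀ᵐ x ∂(volume.restrict Ω),
      Tendsto (fun k => φ k x) atTop (𝓝 (G.indicator (fun _ => (1 : ℝ)) x)))
    (hsup : ∃ C : ℝ, ∀ k,
      (∫ x in Ω, (ξ k / 2 * ‖gradient (φ k) x‖ ^ 2 + W (φ k x) / ξ k)) ≤ C) :
    perim Ω G ≤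
      liminf (fun k => ∫ x in Ω, Real.sqrt (2 * W (φ k x)) * ‖gradient (φ k) x‖) atTop ∧
    liminf (fun k => ∫ x in Ω, Real.sqrt (2 * W (φ k x)) * ‖gradient (φ k) x‖) atTop ≤
      liminf (fun k => ∫ x in Ω, (ξ k / 2 * ‖gradient (φ k) x‖ ^ 2 + W (φ k x) / ξ k))
        atTop := by
  obtain ⟨C, hC⟩ := hsup
  have hint k := integrableOn_sqrt_two_mul_W_mul_norm_gradient (hgradInt k) (hWInt k)
  have hle k : ∫ x in Ω, √(2 * W (φ k x)) * ‖gradient (φ k) x‖ ≤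
      ∫ x in Ω, (ξ k / 2 * ‖gradient (φ k) x‖ ^ 2 + W (φ k x) / ξ k) :=
    setIntegral_mono (hint k) (((hgradInt k).const_mul _).add ((hWInt k).div_const _))
      fun x => sqrt_two_mul_mul_le (W_nonneg _) (hξpos k) _
  have hcobdd : IsCoboundedUnder (· ≥ ·) atTop
      fun k => ∫ x in Ω, √(2 * W (φ k x)) * ‖gradient (φ k) x‖ :=
    (isBoundedUnder_of ⟨C, fun k => (hle k).trans (hC k)⟩).isCoboundedUnder_ge
  refine ⟨csSup_le perimSet_nonempty ?_, liminf_le_liminf (.of_forall hle)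
    (isBoundedUnder_of ⟨0, fun k =>
      setIntegral_nonneg hΩopen.measurableSet fun x _ => by positivity⟩)
    (isBoundedUnder_of ⟨C, hC⟩).isCoboundedUnder_ge⟩
  rintro _ ⟨g, hg, hgc, hgΩ, hg1, rfl⟩
  have hlim := tendsto_setIntegral_etaTrunc_comp_mul hGmeas hGΩ
    (fun k => (hφ k).continuousOn.aestronglyMeasurable hΩopen.measurableSet)
    ((continuous_vdiv hg).integrable_of_hasCompactSupport hgc.vdiv) hae
  rw [← hlim.liminf_eq]
  exact liminf_le_liminf (.of_forall fun k =>
    setIntegral_etaTrunc_comp_mul_vdiv_le hΩopen (hφ k) hg hgc hgΩ hg1 (hint k))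
    hlim.isBoundedUnder_ge hcobdd

theorem perimeter_le_liminf {n : ℕ} (hn : 2 ≤ n)
    (Ω : Set (EuclideanSpace ℝ (Fin n))) (hΩne : Ω.Nonempty) (hΩopen : IsOpen Ω)
    (hΩbdd : Bornology.IsBounded Ω)
    (G : Set (EuclideanSpace ℝ (Fin n))) (hGmeas : MeasurableSet G) (hGΩ : G ⊆ Ω)
    (hPfin : BddAbove (perimSet Ω G))
    (ξ : ℕ → ℝ) (hξpos : ∀ k, 0 < ξ k) (hξanti : StrictAnti ξ)
    (hξ0 : Tendsto ξ atTop (𝓝 0))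
    (φ : ℕ → EuclideanSpace ℝ (Fin n) → ℝ)
    (hφ : ∀ k, ContDiffOn ℝ 1 (φ k) Ω)
    (hgradInt : ∀ k, IntegrableOn (fun x => ‖gradient (φ k) x‖ ^ 2) Ω)
    (hWInt : ∀ k, IntegrableOn (fun x => W (φ k x)) Ω)
    (hae : ∀ᵐ x ∂(volume.restrict Ω),
      Tendsto (fun k => φ k x) atTop (𝓝 (G.indicator (fun _ => (1 : ℝ)) x)))
    (hsup : ∃ C : ℝ, ∀ k,
      (∫ x in Ω, (ξ k / 2 * ‖gradient (φ k) x‖ ^ 2 + W (φ k x) / ξ k)) ≤ C) :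
    perim Ω G ≤
      liminf (fun k => ∫ x in Ω, Real.sqrt (2 * W (φ k x)) * ‖gradient (φ k) x‖) atTop ∧
    liminf (fun k => ∫ x in Ω, Real.sqrt (2 * W (φ k x)) * ‖gradient (φ k) x‖) atTop ≤
      liminf (fun k => ∫ x in Ω, (ξ k / 2 * ‖gradient (φ k) x‖ ^ 2 + W (φ k x) / ξ k))
        atTop :=
  perimeter_le_liminf_general Ω hΩopen G hGmeas hGΩ ξ hξpos φ hφ hgradInt hWInt hae hsup
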